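/- Let F be an affine GIFS of order m on ℝ^d with attractor A_F. Then the finite sets {B^α : α ∈ ₖΩ} converge to A_F in the Hausdorff–Pompeiu metric as k → ∞, where B^α = f_α(0,...,0) is the constant term of the affine iterated map f_α. -/
import Mathlib


open Matrix Filter Metric TopologicalSpace

/-- Code space in tree representation: `AffCode n m k` represents `ₖ₊₁Ω`,
via `Ω₁` for `k = 0` and `ₖ₊₂Ω ≅ Ω₁ × (ₖ₊₁Ω)^m`. -/
def AffCode (n m : ℕ) : ℕ → Type
  | 0 => Fin n
  | k + 1 => Fin n × (Fin m → AffCode n m k)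

/-- Iterated product spaces: `AffSp X m k` represents `X_{k+1}`. -/
def AffSp (X : Type*) (m : ℕ) : ℕ → Type _
  | 0 => Fin m → X
  | k + 1 => Fin m → AffSp X m k

/-- The iterated maps `f_α : X_{k+1} → X`. -/
def affIter {X : Type*} {n m : ℕ} (f : Fin n → (Fin m → X) → X) :
    ∀ k, AffCode n m k → AffSp X m k → X
  | 0, a, x => f a x
  | k + 1, a, x => f a.1 (fun i => affIter f k (a.2 i) (x i))

/-- The all-zeros element of `X_{k+1}` for `X = ℝ^d`. -/
def affZero {d m : ℕ} : ∀ k, AffSp (Fin d → ℝ) m k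
  | 0 => fun _ => 0
  | k + 1 => fun _ => affZero k

namespace Stmt16Aux

variable {n m d : ℕ}

/-- All leaf-distances between two elements of `X_{k+1}` are bounded by `R`. -/
def Bnd (R : ℝ) : ∀ k, AffSp (Fin d → ℝ) m k → AffSp (Fin d → ℝ) m k → Prop
  | 0, x, y => ∀ i, dist (x i) (y i) ≤ R
  | k + 1, x, y => ∀ i, Bnd R k (x i) (y i)

/-- All leaves belong to `S`. -/
def MemA (S : Set (Fin d → ℝ)) : ∀ k, AffSp (Fin d → ℝ) m k → Prop
  | 0, x => ∀ i, x i ∈ S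
  | k + 1, x => ∀ i, MemA S k (x i)

/-- The constant element of `X_{k+1}` with all leaves `p`. -/
def constSp (p : Fin d → ℝ) : ∀ k, AffSp (Fin d → ℝ) m k
  | 0 => fun _ => p
  | k + 1 => fun _ => constSp p k

lemma iter_nonneg (φ : ℝ → ℝ) (hφ : ∀ t, 0 ≤ t → 0 ≤ φ t) {R : ℝ} (hR : 0 ≤ R) :
    ∀ k, 0 ≤ φ^[k] R := by
  intro k
  induction k with
  | zero => simpa using hR
  | succ k ih => rw [Function.iterate_succ_apply']; exact hφ _ ih

lemma iter_dist (f : Fin n → (Fin m → (Fin d → ℝ)) → (Fin d → ℝ))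
    (φ : ℝ → ℝ) (hφ_mono : MonotoneOn φ (Set.Ici 0))
    (hφ_nonneg : ∀ t, 0 ≤ t → 0 ≤ φ t)
    (hcontr : ∀ i, ∀ x y : Fin m → (Fin d → ℝ),
      dist (f i x) (f i y) ≤ φ (dist x y))
    {R : ℝ} (hR : 0 ≤ R) :
    ∀ k (a : AffCode n m k) (x y : AffSp (Fin d → ℝ) m k), Bnd R k x y →
      dist (affIter f k a x) (affIter f k a y) ≤ φ^[k + 1] R := by
  intro k
  induction k with
  | zero =>
    intro a x y h
    have hxy : dist (fun i => x i) ((fun i => y i) : Fin m → (Fin d → ℝ)) ≤ R :=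
      (dist_pi_le_iff hR).2 h
    calc dist (f a x) (f a y)
        ≤ φ (dist (fun i => x i) ((fun i => y i) : Fin m → (Fin d → ℝ))) := hcontr a _ _
      _ ≤ φ R := hφ_mono (Set.mem_Ici.2 dist_nonneg) (Set.mem_Ici.2 hR) hxy
      _ = φ^[1] R := rfl
  | succ k ih =>
    intro a x y h
    have hb : (0 : ℝ) ≤ φ^[k + 1] R := iter_nonneg φ hφ_nonneg hR (k + 1)
    have hd : dist (fun i => affIter f k (a.2 i) (x i))
        (fun i => affIter f k (a.2 i) (y i)) ≤ φ^[k + 1] R :=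
      (dist_pi_le_iff hb).2 fun i => ih (a.2 i) (x i) (y i) (h i)
    calc dist (affIter f (k + 1) a x) (affIter f (k + 1) a y)
        = dist (f a.1 (fun i => affIter f k (a.2 i) (x i)))
            (f a.1 (fun i => affIter f k (a.2 i) (y i))) := rfl
      _ ≤ φ (dist (fun i => affIter f k (a.2 i) (x i))
            (fun i => affIter f k (a.2 i) (y i))) := hcontr a.1 _ _
      _ ≤ φ (φ^[k + 1] R) := hφ_mono (Set.mem_Ici.2 dist_nonneg) (Set.mem_Ici.2 hb) hd
      _ = φ^[k + 2] R := (Function.iterate_succ_apply' φ (k + 1) R).symm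

lemma surj (S : Set (Fin d → ℝ)) (f : Fin n → (Fin m → (Fin d → ℝ)) → (Fin d → ℝ))
    (hS : S = ⋃ i, f i '' Set.pi Set.univ fun _ : Fin m => S) :
    ∀ k, ∀ p ∈ S, ∃ (a : AffCode n m k) (x : AffSp (Fin d → ℝ) m k),
      MemA S k x ∧ affIter f k a x = p := by
  intro k
  induction k with
  | zero =>
    intro p hp
    rw [hS] at hp
    obtain ⟨i, x, hx, hfx⟩ : ∃ i x, (∀ j, x j ∈ S) ∧ f i x = p := by
      simpa [Set.mem_iUnion, Set.mem_image, Set.mem_univ_pi] using hp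
    exact ⟨i, x, hx, hfx⟩
  | succ k ih =>
    intro p hp
    rw [hS] at hp
    obtain ⟨i, x, hx, hfx⟩ : ∃ i x, (∀ j, x j ∈ S) ∧ f i x = p := by
      simpa [Set.mem_iUnion, Set.mem_image, Set.mem_univ_pi] using hp
    choose a z hz hfz using fun j => ih (x j) (hx j)
    refine ⟨(i, a), z, hz, ?_⟩
    show f i (fun j => affIter f k (a j) (z j)) = p
    have hzz : (fun j => affIter f k (a j) (z j)) = x := funext hfz
    rw [hzz, hfx]

lemma closed (S : Set (Fin d → ℝ)) (f : Fin n → (Fin m → (Fin d → ℝ)) → (Fin d → ℝ))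
    (hS : S = ⋃ i, f i '' Set.pi Set.univ fun _ : Fin m => S) :
    ∀ k (a : AffCode n m k) (x : AffSp (Fin d → ℝ) m k),
      MemA S k x → affIter f k a x ∈ S := by
  intro k
  induction k with
  | zero =>
    intro a x hx
    rw [hS]
    exact Set.mem_iUnion.2 ⟨a, x, fun j _ => hx j, rfl⟩
  | succ k ih =>
    intro a x hx
    rw [hS]
    exact Set.mem_iUnion.2 ⟨a.1, fun i => affIter f k (a.2 i) (x i),
      fun j _ => ih (a.2 j) (x j) (hx j), rfl⟩

lemma bnd_zero (S : Set (Fin d → ℝ)) (R : ℝ)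
    (hR : ∀ p ∈ S, dist p (0 : Fin d → ℝ) ≤ R) :
    ∀ k (x : AffSp (Fin d → ℝ) m k), MemA S k x → Bnd R k x (affZero k) := by
  intro k
  induction k with
  | zero => intro x hx i; exact hR _ (hx i)
  | succ k ih => intro x hx i; exact ih _ (hx i)

lemma bnd_const_zero (R : ℝ) (p : Fin d → ℝ) (hp : dist p (0 : Fin d → ℝ) ≤ R) :
    ∀ k, Bnd R k (constSp p k) (affZero k : AffSp (Fin d → ℝ) m k) := by
  intro k
  induction k with
  | zero => intro i; exact hp
  | succ k ih => intro i; exact ih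

lemma memA_const (S : Set (Fin d → ℝ)) (p : Fin d → ℝ) (hp : p ∈ S) :
    ∀ k, MemA S k (constSp p k : AffSp (Fin d → ℝ) m k) := by
  intro k
  induction k with
  | zero => intro i; exact hp
  | succ k ih => intro i; exact ih

end Stmt16Aux

open Stmt16Aux in
/-- For an affine GIFS with attractor `A_F`, the finite sets
`{B^α : α ∈ ₖΩ}` of constant terms `B^α = f_α(0,...,0)` converge to `A_F` in the
Hausdorff–Pompeiu metric as `k → ∞`. (Index `k : ℕ` is the paper's level `k+1`.) -/
theorem stmt16 {n m d : ℕ} (hn : 0 < n)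
    (A : Fin n → Fin m → Matrix (Fin d) (Fin d) ℝ) (B : Fin n → Fin d → ℝ)
    (f : Fin n → (Fin m → (Fin d → ℝ)) → (Fin d → ℝ))
    (hf : ∀ i (x : Fin m → (Fin d → ℝ)),
      f i x = (∑ j : Fin m, (A i j).mulVec (x j)) + B i)
    (φ : ℝ → ℝ) (hφ_mono : MonotoneOn φ (Set.Ici 0))
    (hφ_nonneg : ∀ t, 0 ≤ t → 0 ≤ φ t)
    (hφ_iter : ∀ t > 0, Tendsto (fun k => φ^[k] t) atTop (nhds 0))
    (hcontr : ∀ i, ∀ x y : Fin m → (Fin d → ℝ),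
      dist (f i x) (f i y) ≤ φ (dist x y))
    (Att : NonemptyCompacts (Fin d → ℝ))
    (hAtt : (Att : Set (Fin d → ℝ)) =
      ⋃ i, f i '' Set.pi Set.univ (fun _ : Fin m => (Att : Set (Fin d → ℝ)))) :
    Tendsto (fun k => hausdorffDist (Att : Set (Fin d → ℝ))
        (Set.range (fun α : AffCode n m k => affIter f k α (affZero k))))
      atTop (nhds 0) := by
  obtain ⟨p₀, hp₀⟩ := Att.nonempty
  obtain ⟨R₀, hR₀⟩ := Att.isCompact.isBounded.subset_closedBall 0
  set R : ℝ := max R₀ 1 with hRdef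
  have hR1 : (0 : ℝ) < R := lt_of_lt_of_le one_pos (le_max_right _ _)
  have hdistR : ∀ p ∈ (Att : Set (Fin d → ℝ)), dist p (0 : Fin d → ℝ) ≤ R := by
    intro p hp
    have := hR₀ hp
    rw [Metric.mem_closedBall] at this
    exact this.trans (le_max_left _ _)
  have key : ∀ k, hausdorffDist (Att : Set (Fin d → ℝ))
      (Set.range fun α : AffCode n m k => affIter f k α (affZero k)) ≤ φ^[k + 1] R := by
    intro k
    apply hausdorffDist_le_of_mem_dist (iter_nonneg φ hφ_nonneg hR1.le (k + 1))
    · intro p hp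
      obtain ⟨a, x, hx, hfx⟩ := surj _ f hAtt k p hp
      refine ⟨affIter f k a (affZero k), Set.mem_range_self a, ?_⟩
      rw [← hfx]
      exact iter_dist f φ hφ_mono hφ_nonneg hcontr hR1.le k a x (affZero k)
        (bnd_zero _ R hdistR k x hx)
    · rintro q ⟨a, rfl⟩
      refine ⟨affIter f k a (constSp p₀ k), closed _ f hAtt k a _ (memA_const _ p₀ hp₀ k), ?_⟩
      rw [dist_comm]
      exact iter_dist f φ hφ_mono hφ_nonneg hcontr hR1.le k a (constSp p₀ k) (affZero k)
        (bnd_const_zero R p₀ (hdistR p₀ hp₀) k)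
  have h0 : Tendsto (fun k => φ^[k + 1] R) atTop (nhds 0) :=
    (hφ_iter R hR1).comp (tendsto_add_atTop_nat 1)
  exact squeeze_zero (fun k => hausdorffDist_nonneg) key h0
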